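/- Let C be a 2-copula and let μ_C be the probability measure on [0,1]² induced by C. Then C is I(1,-1) if, and only if, [v - C(u,v)]·[v' - C(u',v')] ≤ [v - C(u',v)]·[v' - C(u,v')] for all u, v, u', v' in [0,1] with u ≤ u' and v ≤ v'. -/

import Mathlib

open MeasureTheory Set

/-- A (bivariate) 2-copula. -/
structure IsCopula2 (C : ℝ → ℝ → ℝ) : Prop where
  grounded_left : ∀ v ∈ Icc (0:ℝ) 1, C 0 v = 0
  grounded_right : ∀ u ∈ Icc (0:ℝ) 1, C u 0 = 0
  margin_left : ∀ u ∈ Icc (0:ℝ) 1, C u 1 = u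
  margin_right : ∀ v ∈ Icc (0:ℝ) 1, C 1 v = v
  twoIncreasing : ∀ u u' v v' : ℝ, u ∈ Icc (0:ℝ) 1 → u' ∈ Icc (0:ℝ) 1 →
    v ∈ Icc (0:ℝ) 1 → v' ∈ Icc (0:ℝ) 1 → u ≤ u' → v ≤ v' →
    0 ≤ C u' v' - C u' v - C u v' + C u v

/-- A joint law `μ` on `ℝ × ℝ` is increasing according to the direction `(a₁, a₂)`
(the I(α) property): the conditional probability
`P[a₁U > x₁, a₂V > x₂ | a₁U > x₁', a₂V > x₂']` is nondecreasing in `(x₁', x₂')`,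
expressed equivalently via the cross-product inequality. -/
def IsIncDir2 (μ : Measure (ℝ × ℝ)) (a₁ a₂ : ℝ) : Prop :=
  ∀ x₁ x₂ x₁' x₂' x₁'' x₂'' : ℝ, x₁' ≤ x₁'' → x₂' ≤ x₂'' →
    μ {p : ℝ × ℝ | (a₁ * p.1 > x₁ ∧ a₂ * p.2 > x₂) ∧ (a₁ * p.1 > x₁' ∧ a₂ * p.2 > x₂')} *
      μ {p : ℝ × ℝ | a₁ * p.1 > x₁'' ∧ a₂ * p.2 > x₂''} ≤
    μ {p : ℝ × ℝ | (a₁ * p.1 > x₁ ∧ a₂ * p.2 > x₂) ∧ (a₁ * p.1 > x₁'' ∧ a₂ * p.2 > x₂'')} *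
      μ {p : ℝ × ℝ | a₁ * p.1 > x₁' ∧ a₂ * p.2 > x₂'}


/-!
Write `F s t = μ {U > s, V < t}`. The events in `I(1,-1)` are such lower-right quadrants, and
two of them meet in the quadrant at `(max, min)`, so `I(1,-1)` is a family of inequalities between
products of values of `F`. As `F` is antitone in `s` and monotone in `t`, this family is equivalent
to reverse regularity `F s t * F s' t' ≤ F s' t * F s t'` for `s ≤ s'`, `t ≤ t'`, whose lattice form
`F P * F Q ≤ F (P.1 ⊔ Q.1, P.2 ⊓ Q.2) * F (P.1 ⊓ Q.1, P.2 ⊔ Q.2)` yields `I(1,-1)` after one more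
use of monotonicity on the last factor. Finally `F s t = v - C u v`, where
`(u, v)` is `(s, t)` clamped to the unit square; the strict bound on `V` does not matter because
the law of `V` is uniform, hence atomless.
-/

open scoped ENNReal

section ReverseRegular

variable {α β M : Type*}

/-- Karlin's reverse regularity of order two, `RR₂`. -/
def ReverseRegular2 [LE α] [LE β] [Mul M] [LE M] (K : α → β → M) : Prop :=
  ∀ ⦃x x' : α⦄ ⦃y y' : β⦄, x ≤ x' → y ≤ y' → K x y * K x' y' ≤ K x' y * K x y'

def ReverseRegular2On [LE α] [LE β] [Mul M] [LE M] (s : Set α) (t : Set β) (K : α → β → M) :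
    Prop :=
  ∀ x ∈ s, ∀ y ∈ t, ∀ x' ∈ s, ∀ y' ∈ t, x ≤ x' → y ≤ y' → K x y * K x' y' ≤ K x' y * K x y'

variable [LinearOrder α] [LinearOrder β]

theorem ReverseRegular2.mul_le_mul_max_min [CommMagma M] [Preorder M] {K : α → β → M}
    (hK : ReverseRegular2 K) (x x' : α) (y y' : β) :
    K x y * K x' y' ≤ K (max x x') (min y y') * K (min x x') (max y y') := by
  rcases le_total x x' with hx | hx <;> rcases le_total y y' with hy | hy
  · simpa only [max_eq_right hx, min_eq_left hy, min_eq_left hx, max_eq_right hy] using hK hx hy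
  · rw [max_eq_right hx, min_eq_right hy, min_eq_left hx, max_eq_left hy, mul_comm]
  · rw [max_eq_left hx, min_eq_left hy, min_eq_right hx, max_eq_right hy]
  · rw [max_eq_left hx, min_eq_right hy, min_eq_right hx, max_eq_left hy, mul_comm]
    exact hK hx hy

theorem reverseRegular2_iff_max_min [CommMagma M] [Preorder M] [MulLeftMono M] {K : α → β → M}
    (hanti : ∀ y, Antitone (K · y)) (hmono : ∀ x, Monotone (K x)) :
    ReverseRegular2 K ↔ ∀ (a : α) (b : β) (a' : α) (b' : β) (a'' : α) (b'' : β),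
      a' ≤ a'' → b'' ≤ b' →
      K (max a a') (min b b') * K a'' b'' ≤ K (max a a'') (min b b'') * K a' b' := by
  refine ⟨fun hK a b a' b' a'' b'' ha hb => ?_, fun h x x' y y' hx hy => ?_⟩
  · calc K (max a a') (min b b') * K a'' b''
        ≤ K (max (max a a') a'') (min (min b b') b'') *
            K (min (max a a') a'') (max (min b b') b'') := hK.mul_le_mul_max_min _ _ _ _
      _ = K (max a a'') (min b b'') * K (min (max a a') a'') (max (min b b') b'') := by
        rw [max_assoc, max_eq_right ha, min_assoc, min_eq_right hb]
      _ ≤ K (max a a'') (min b b'') * K a' b' :=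
        mul_le_mul_right ((hanti _ (le_min (le_max_right a a') ha)).trans
          (hmono _ (max_le (min_le_right b b') hb))) _
  · simpa only [max_self, max_eq_right hx, min_eq_left hy] using h x y x y' x' y' hx le_rfl

theorem reverseRegular2_comp_projIcc_iff [Mul M] [LE M] {a b : α} {c d : β} (hab : a ≤ b)
    (hcd : c ≤ d) {K : α → β → M} :
    ReverseRegular2 (fun s t => K (projIcc a b hab s) (projIcc c d hcd t)) ↔
      ReverseRegular2On (Icc a b) (Icc c d) K := by
  refine ⟨fun hK x hx y hy x' hx' y' hy' hxx hyy => ?_, fun hK x x' y y' hx hy => ?_⟩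
  · simpa only [projIcc_of_mem, hx, hy, hx', hy'] using hK hxx hyy
  · exact hK _ (projIcc a b hab x).2 _ (projIcc c d hcd y).2 _ (projIcc a b hab x').2 _
      (projIcc c d hcd y').2 (monotone_projIcc hab hx) (monotone_projIcc hcd hy)

end ReverseRegular

theorem reverseRegular2On_ofReal_iff {α β : Type*} [LE α] [LE β] {s : Set α} {t : Set β}
    {K : α → β → ℝ} (hK : ∀ x ∈ s, ∀ y ∈ t, 0 ≤ K x y) :
    ReverseRegular2On s t (fun x y => ENNReal.ofReal (K x y)) ↔ ReverseRegular2On s t K := by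
  refine forall₂_congr fun x hx => forall₂_congr fun y hy => forall₂_congr fun x' hx' =>
    forall₂_congr fun y' hy' => imp_congr_right fun _ => imp_congr_right fun _ => ?_
  rw [← ENNReal.ofReal_mul (hK x hx y hy), ← ENNReal.ofReal_mul (hK x' hx' y hy),
    ENNReal.ofReal_le_ofReal_iff (mul_nonneg (hK x' hx' y hy) (hK x hx y' hy'))]

namespace IsCopula2

variable {C : ℝ → ℝ → ℝ} {u u' v : ℝ}

theorem mono_left (hC : IsCopula2 C) (hu : u ∈ Icc (0:ℝ) 1) (hu' : u' ∈ Icc (0:ℝ) 1)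
    (hv : v ∈ Icc (0:ℝ) 1) (h : u ≤ u') : C u v ≤ C u' v := by
  linarith [hC.twoIncreasing u u' 0 v hu hu' (left_mem_Icc.2 zero_le_one) hv h hv.1,
    hC.grounded_right u hu, hC.grounded_right u' hu']

theorem nonneg (hC : IsCopula2 C) (hu : u ∈ Icc (0:ℝ) 1) (hv : v ∈ Icc (0:ℝ) 1) : 0 ≤ C u v :=
  hC.grounded_left v hv ▸ hC.mono_left (left_mem_Icc.2 zero_le_one) hu hv hu.1

theorem le_right (hC : IsCopula2 C) (hu : u ∈ Icc (0:ℝ) 1) (hv : v ∈ Icc (0:ℝ) 1) : C u v ≤ v :=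
  (hC.mono_left hu (right_mem_Icc.2 zero_le_one) hv hu.2).trans_eq (hC.margin_right v hv)

end IsCopula2

def IsCopulaMeasure (C : ℝ → ℝ → ℝ) (μ : Measure (ℝ × ℝ)) : Prop :=
  ∀ u ∈ Icc (0:ℝ) 1, ∀ v ∈ Icc (0:ℝ) 1, μ (Icc 0 u ×ˢ Icc 0 v) = ENNReal.ofReal (C u v)

def lowerRightMass (μ : Measure (ℝ × ℝ)) (s t : ℝ) : ℝ≥0∞ :=
  μ {p | s < p.1 ∧ p.2 < t}

theorem lowerRightMass_antitone (μ : Measure (ℝ × ℝ)) (t : ℝ) :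
    Antitone (lowerRightMass μ · t) :=
  fun _ _ hs => measure_mono fun _ hp => ⟨hs.trans_lt hp.1, hp.2⟩

theorem lowerRightMass_monotone (μ : Measure (ℝ × ℝ)) (s : ℝ) :
    Monotone (lowerRightMass μ s) :=
  fun _ _ ht => measure_mono fun _ hp => ⟨hp.1, hp.2.trans_le ht⟩

namespace IsCopulaMeasure

variable {C : ℝ → ℝ → ℝ} {μ : Measure (ℝ × ℝ)} [IsProbabilityMeasure μ]

local notation "π" x:max => (projIcc (0:ℝ) 1 zero_le_one x : ℝ)

theorem measure_compl_unitSquare (hμC : IsCopulaMeasure C μ) (hC : IsCopula2 C) :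
    μ (Icc (0:ℝ) 1 ×ˢ Icc (0:ℝ) 1)ᶜ = 0 := by
  have h1 : (1:ℝ) ∈ Icc (0:ℝ) 1 := right_mem_Icc.2 zero_le_one
  rw [prob_compl_eq_zero_iff (measurableSet_Icc.prod measurableSet_Icc), hμC 1 h1 1 h1,
    hC.margin_left 1 h1, ENNReal.ofReal_one]

theorem measure_fst_le_snd_le (hμC : IsCopulaMeasure C μ) (hC : IsCopula2 C) (x y : ℝ) :
    μ {p | p.1 ≤ x ∧ p.2 ≤ y} = ENNReal.ofReal (C (π x) (π y)) := by
  rw [← measure_inter_conull (hμC.measure_compl_unitSquare hC)]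
  rcases lt_or_ge x 0 with hx | hx
  · rw [projIcc_of_le_left _ hx.le, hC.grounded_left _ (projIcc _ _ _ y).2, ENNReal.ofReal_zero]
    exact measure_mono_null (fun p hp => absurd (hp.1.1.trans_lt hx) (not_lt.2 hp.2.1.1))
      measure_empty
  rcases lt_or_ge y 0 with hy | hy
  · rw [projIcc_of_le_left _ hy.le, hC.grounded_right _ (projIcc _ _ _ x).2, ENNReal.ofReal_zero]
    exact measure_mono_null (fun p hp => absurd (hp.1.2.trans_lt hy) (not_lt.2 hp.2.2.1))
      measure_empty
  have hrect : {p : ℝ × ℝ | p.1 ≤ x ∧ p.2 ≤ y} ∩ Icc 0 1 ×ˢ Icc 0 1 =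
      Icc 0 (π x) ×ˢ Icc 0 (π y) := by
    ext p
    simp only [coe_projIcc, max_eq_right (le_min zero_le_one hx),
      max_eq_right (le_min zero_le_one hy), mem_inter_iff, mem_ofPred_eq, mem_prod, mem_Icc,
      le_min_iff]
    tauto
  rw [hrect, hμC _ (projIcc _ _ _ x).2 _ (projIcc _ _ _ y).2]

theorem measure_snd_le (hμC : IsCopulaMeasure C μ) (hC : IsCopula2 C) (t : ℝ) :
    μ {p | p.2 ≤ t} = ENNReal.ofReal (π t) := by
  have hS := hμC.measure_compl_unitSquare hC
  have hslab : {p : ℝ × ℝ | p.2 ≤ t} ∩ Icc 0 1 ×ˢ Icc 0 1 =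
      {p : ℝ × ℝ | p.1 ≤ 1 ∧ p.2 ≤ t} ∩ Icc 0 1 ×ˢ Icc 0 1 := by
    ext p
    simp only [mem_inter_iff, mem_ofPred_eq, mem_prod, mem_Icc]
    tauto
  rw [← measure_inter_conull hS, hslab, measure_inter_conull hS, hμC.measure_fst_le_snd_le hC,
    projIcc_right, hC.margin_right _ (projIcc _ _ _ t).2]

theorem measure_fst_gt_snd_le (hμC : IsCopulaMeasure C μ) (hC : IsCopula2 C) (s t : ℝ) :
    μ {p | s < p.1 ∧ p.2 ≤ t} = ENNReal.ofReal (π t - C (π s) (π t)) := by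
  have hdiff : {p : ℝ × ℝ | s < p.1 ∧ p.2 ≤ t} = {p | p.2 ≤ t} \ {p | p.1 ≤ s ∧ p.2 ≤ t} := by
    ext p
    simp only [mem_sdiff, mem_ofPred_eq, not_and, not_le]
    grind
  rw [hdiff, measure_sdiff (fun p hp => hp.2) (by measurability) (measure_ne_top _ _),
    hμC.measure_snd_le hC, hμC.measure_fst_le_snd_le hC,
    ENNReal.ofReal_sub _ (hC.nonneg (projIcc _ _ _ s).2 (projIcc _ _ _ t).2)]

theorem measure_snd_eq (hμC : IsCopulaMeasure C μ) (hC : IsCopula2 C) (t : ℝ) :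
    μ {p | p.2 = t} = 0 := by
  refine le_antisymm (ENNReal.le_of_forall_pos_le_add fun ε hε _ => ?_) zero_le
  rw [zero_add, ← ENNReal.ofReal_coe_nnreal]
  calc μ {p | p.2 = t} ≤ μ ({p | p.2 ≤ t} \ {p | p.2 ≤ t - ε}) :=
        measure_mono fun p (hp : p.2 = t) => ⟨hp.le, by simp [hp, hε]⟩
    _ = ENNReal.ofReal (π t - π (t - ε)) := by
        rw [measure_sdiff (ofPred_subset_ofPred.2 fun p hp => hp.trans (sub_le_self t ε.2))
          (by measurability) (measure_ne_top _ _), hμC.measure_snd_le hC, hμC.measure_snd_le hC,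
          ENNReal.ofReal_sub _ (projIcc _ _ _ _).2.1]
    _ ≤ ENNReal.ofReal ε := ENNReal.ofReal_le_ofReal <| (le_abs_self _).trans <|
        (abs_projIcc_sub_projIcc _).trans (by simp)

theorem lowerRightMass_eq (hμC : IsCopulaMeasure C μ) (hC : IsCopula2 C) (s t : ℝ) :
    lowerRightMass μ s t = ENNReal.ofReal (π t - C (π s) (π t)) := by
  rw [← hμC.measure_fst_gt_snd_le hC]
  refine le_antisymm (measure_mono fun p hp => ⟨hp.1, hp.2.le⟩) ?_
  calc μ {p | s < p.1 ∧ p.2 ≤ t} ≤ μ ({p | s < p.1 ∧ p.2 < t} ∪ {p | p.2 = t}) :=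
        measure_mono fun p hp => hp.2.lt_or_eq.imp (fun h => ⟨hp.1, h⟩) id
    _ ≤ lowerRightMass μ s t + μ {p | p.2 = t} := measure_union_le _ _
    _ = lowerRightMass μ s t := by rw [hμC.measure_snd_eq hC, add_zero]

end IsCopulaMeasure

theorem isIncDir2_one_neg_one_iff (μ : Measure (ℝ × ℝ)) :
    IsIncDir2 μ 1 (-1) ↔ ∀ a b a' b' a'' b'' : ℝ, a' ≤ a'' → b'' ≤ b' →
      lowerRightMass μ (max a a') (min b b') * lowerRightMass μ a'' b'' ≤
        lowerRightMass μ (max a a'') (min b b'') * lowerRightMass μ a' b' := by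
  have hquad (x y : ℝ) :
      {p : ℝ × ℝ | 1 * p.1 > x ∧ -1 * p.2 > y} = {p | x < p.1 ∧ p.2 < -y} := by
    ext p
    simp only [mem_ofPred_eq, one_mul, neg_one_mul, gt_iff_lt, lt_neg]
  have hquad₂ (x y x' y' : ℝ) :
      {p : ℝ × ℝ | (1 * p.1 > x ∧ -1 * p.2 > y) ∧ (1 * p.1 > x' ∧ -1 * p.2 > y')} =
        {p | max x x' < p.1 ∧ p.2 < min (-y) (-y')} := by
    ext p
    simp only [mem_ofPred_eq, one_mul, neg_one_mul, gt_iff_lt, lt_neg, max_lt_iff, lt_min_iff]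
    tauto
  simp only [IsIncDir2, lowerRightMass, hquad, hquad₂]
  refine ⟨fun h a b a' b' a'' b'' ha hb => ?_, fun h x₁ x₂ x₁' x₂' x₁'' x₂'' h₁ h₂ => ?_⟩
  · simpa only [neg_neg] using h a (-b) a' (-b') a'' (-b'') ha (neg_le_neg hb)
  · exact h x₁ (-x₂) x₁' (-x₂') x₁'' (-x₂'') h₁ (neg_le_neg h₂)

theorem copula_I_1_neg1_iff_general (C : ℝ → ℝ → ℝ) (hC : IsCopula2 C)
    (μ : Measure (ℝ × ℝ)) [IsProbabilityMeasure μ]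
    (hμC : ∀ u ∈ Icc (0:ℝ) 1, ∀ v ∈ Icc (0:ℝ) 1,
      μ (Icc 0 u ×ˢ Icc 0 v) = ENNReal.ofReal (C u v)) :
    IsIncDir2 μ 1 (-1) ↔
      ∀ u ∈ Icc (0:ℝ) 1, ∀ v ∈ Icc (0:ℝ) 1, ∀ u' ∈ Icc (0:ℝ) 1, ∀ v' ∈ Icc (0:ℝ) 1,
        u ≤ u' → v ≤ v' →
        (v - C u v) * (v' - C u' v') ≤ (v - C u' v) * (v' - C u v') := by
  have hF : lowerRightMass μ = fun s t => ENNReal.ofReal (projIcc (0:ℝ) 1 zero_le_one t -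
      C (projIcc 0 1 zero_le_one s) (projIcc 0 1 zero_le_one t)) :=
    funext₂ (IsCopulaMeasure.lowerRightMass_eq hμC hC)
  calc IsIncDir2 μ 1 (-1) ↔ ReverseRegular2 (lowerRightMass μ) :=
        (isIncDir2_one_neg_one_iff μ).trans (reverseRegular2_iff_max_min
          (lowerRightMass_antitone μ) (lowerRightMass_monotone μ)).symm
    _ ↔ ReverseRegular2On (Icc (0:ℝ) 1) (Icc (0:ℝ) 1) fun u v => ENNReal.ofReal (v - C u v) := by
        rw [hF]
        exact reverseRegular2_comp_projIcc_iff (K := fun u v => ENNReal.ofReal (v - C u v))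
          zero_le_one zero_le_one
    _ ↔ _ := reverseRegular2On_ofReal_iff fun u hu v hv => sub_nonneg.2 (hC.le_right hu hv)

theorem copula_I_1_neg1_iff (C : ℝ → ℝ → ℝ) (hC : IsCopula2 C)
    (μ : Measure (ℝ × ℝ)) [IsProbabilityMeasure μ]
    (hsupp : μ (Icc (0:ℝ) 1 ×ˢ Icc (0:ℝ) 1) = 1)
    (hμC : ∀ u ∈ Icc (0:ℝ) 1, ∀ v ∈ Icc (0:ℝ) 1,
      μ (Icc 0 u ×ˢ Icc 0 v) = ENNReal.ofReal (C u v)) :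
    IsIncDir2 μ 1 (-1) ↔
      ∀ u ∈ Icc (0:ℝ) 1, ∀ v ∈ Icc (0:ℝ) 1, ∀ u' ∈ Icc (0:ℝ) 1, ∀ v' ∈ Icc (0:ℝ) 1,
        u ≤ u' → v ≤ v' →
        (v - C u v) * (v' - C u' v') ≤ (v - C u' v) * (v' - C u v') :=
  copula_I_1_neg1_iff_general C hC μ hμC
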